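/- arXiv:2510.03937 — 2 statements merged into one kernel-verified Lean document; each statement's English description precedes it below -/
import Mathlib

section
/- For 1/2 < alpha < 1, the Markov chain on the positive integers with p_{i,i-2} = (1/9) i^{-alpha}, p_{i,i-1} = (1/4) i^{-alpha}, p_{i,i+1} = (1/2) i^{-alpha}, and p_{i,i} = 1 - (31/36) i^{-alpha} has mean drift gamma_i = (1/36) i^{-alpha} and second-moment drift sigma_i = (43/36) i^{-alpha}; in particular sigma_i -> 0 as i -> infinity, and the chain is transient. -/
open scoped ENNReal BigOperators
open Filter

/-- A discrete-time Markov chain on the nonnegative integers, given by its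
row-stochastic transition matrix. -/
structure MarkovChain where
  p : ℕ → ℕ → ℝ≥0∞
  row_sum : ∀ i, ∑' j, p i j = 1

namespace MarkovChain

/-- `n`-step transition probabilities. -/
noncomputable def step (M : MarkovChain) : ℕ → ℕ → ℕ → ℝ≥0∞
  | 0, i, j => if i = j then 1 else 0
  | (n+1), i, j => ∑' k, M.p i k * M.step n k j

/-- Irreducibility: every state reaches every other state with positive probability. -/
def Irreducible (M : MarkovChain) : Prop := ∀ i j, ∃ n, 0 < M.step n i j

/-- Probability, starting from `j`, that the chain reaches state `i` for the first
time at time `n` (time `0` counts iff `j = i`). -/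
noncomputable def hitAt (M : MarkovChain) (i : ℕ) : ℕ → ℕ → ℝ≥0∞
  | 0, j => if j = i then 1 else 0
  | (n+1), j => if j = i then 0 else ∑' k, M.p j k * M.hitAt i n k

/-- Probability that the first return to `i` occurs at time `n + 1`. -/
noncomputable def firstReturn (M : MarkovChain) (i n : ℕ) : ℝ≥0∞ :=
  ∑' k, M.p i k * M.hitAt i n k

/-- The chain is recurrent: return to each state is almost sure. -/
def Recurrent (M : MarkovChain) : Prop := ∀ i, ∑' n, M.firstReturn i n = 1

/-- The chain is positive recurrent: recurrent with finite expected return times. -/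
def PositiveRecurrent (M : MarkovChain) : Prop :=
  M.Recurrent ∧ ∀ i, ∑' n : ℕ, ((n : ℝ≥0∞) + 1) * M.firstReturn i n < ⊤

/-- Null recurrent: recurrent but not positive recurrent. -/
def NullRecurrent (M : MarkovChain) : Prop := M.Recurrent ∧ ¬ M.PositiveRecurrent

/-- The chain is transient: return to each state happens with probability `< 1`. -/
def Transient (M : MarkovChain) : Prop := ∀ i, ∑' n, M.firstReturn i n < 1

/-- Mean drift at state `i`. -/
noncomputable def drift (M : MarkovChain) (i : ℕ) : ℝ :=
  ∑' j, (M.p i j).toReal * ((j : ℝ) - i)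

/-- The mean drift at `i` is finite (well-defined). -/
def DriftFinite (M : MarkovChain) (i : ℕ) : Prop :=
  Summable fun j => (M.p i j).toReal * ((j : ℝ) - i)

/-- Second-moment drift at state `i`. -/
noncomputable def secondMoment (M : MarkovChain) (i : ℕ) : ℝ :=
  ∑' j, (M.p i j).toReal * ((j : ℝ) - i) ^ 2

/-- Downward uniformly bounded with bound `k`: no downward jumps longer than `k`. -/
def DownwardBounded (M : MarkovChain) (k : ℕ) : Prop :=
  ∀ i j, j + k < i → M.p i j = 0

/-- Uniformly bounded with bound `d`: no jumps longer than `d`. -/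
def UniformlyBounded (M : MarkovChain) (d : ℕ) : Prop :=
  ∀ i j : ℕ, (d : ℤ) < |(i : ℤ) - j| → M.p i j = 0

end MarkovChain

/-! The drift and the second moment are finite sums over the four possible jumps. For transience,
the jump law at `x ≥ 44` makes `1 / x` superharmonic, so `hitBound k = 44 / max k 44` majorizes the
probability of ever reaching `44` from `k`; hence the return probability to `44` is at most
`∑ j, p 44 j * hitBound j = 1 - c / 90 < 1`, where `c = 44 ^ (-α)`. Irreducibility transfers this
to every state through the Green function `G i = ∑ n, pⁿ i i`, which satisfies `G = 1 + R * G` and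
`G ≤ (1 - R)⁻¹` for the return probability `R`, so it is finite exactly when `R < 1`. -/

open Finset

theorem ENNReal.tsum_mul_sum_mul (p c : ℕ → ℝ≥0∞) (a : ℕ → ℕ → ℝ≥0∞) (s : Finset ℕ) :
    ∑' k, p k * ∑ m ∈ s, a m k * c m = ∑ m ∈ s, (∑' k, p k * a m k) * c m := by
  simp_rw [mul_sum, ← mul_assoc, ← ENNReal.tsum_mul_right]
  exact Summable.tsum_finsetSum fun _ _ => ENNReal.summable

theorem ENNReal.tsum_mul_tsum_eq_tsum_sum_range (a b : ℕ → ℝ≥0∞) :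
    (∑' n, a n) * ∑' n, b n = ∑' n, ∑ k ∈ range (n + 1), a k * b (n - k) := calc
  (∑' n, a n) * ∑' n, b n = ∑' x : ℕ × ℕ, a x.1 * b x.2 := by
    rw [ENNReal.tsum_prod (f := fun m l => a m * b l), ← ENNReal.tsum_mul_right]
    simp_rw [← ENNReal.tsum_mul_left]
  _ = ∑' n, ∑' x : antidiagonal n, a x.1.1 * b x.1.2 :=
    (HasAntidiagonal.sigmaAntidiagonalEquivProd.tsum_eq _).symm.trans (ENNReal.tsum_sigma' _)
  _ = ∑' n, ∑ k ∈ range (n + 1), a k * b (n - k) := by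
    simp_rw [Finset.tsum_subtype (antidiagonal _) fun x => a x.1 * b x.2,
      Nat.sum_antidiagonal_eq_sum_range_succ fun k l => a k * b l]

theorem ENNReal.sum_range_sum_range_succ_mul_le (a b : ℕ → ℝ≥0∞) (N : ℕ) :
    ∑ n ∈ range N, ∑ m ∈ range (n + 1), a m * b (n - m) ≤
      (∑ m ∈ range N, a m) * ∑ l ∈ range N, b l := by
  simp_rw [range_eq_Ico]
  rw [← sum_Ico_Ico_comm, sum_mul]
  refine sum_le_sum fun m _ => ?_
  rw [sum_Ico_eq_sum_range, ← mul_sum]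
  simp only [add_tsub_cancel_left]
  gcongr
  rw [← range_eq_Ico]
  exact range_subset_range.2 (Nat.sub_le N m)

theorem hasSum_of_eq_zero_off_window {β : Type*} [AddCommMonoid β] [TopologicalSpace β]
    {f : ℕ → β} {i : ℕ} (hi : 2 ≤ i)
    (hf : ∀ j, j ≠ i - 2 → j ≠ i - 1 → j ≠ i → j ≠ i + 1 → f j = 0) :
    HasSum f (f (i - 2) + f (i - 1) + f i + f (i + 1)) := by
  have h : HasSum f (∑ j ∈ {i - 2, i - 1, i, i + 1}, f j) :=
    hasSum_sum_of_ne_finset_zero fun j hj => by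
      simp only [mem_insert, mem_singleton, not_or] at hj
      exact hf j hj.1 hj.2.1 hj.2.2.1 hj.2.2.2
  rwa [sum_insert (by simp; omega), sum_insert (by simp; omega), sum_insert (by simp),
    sum_singleton, ← add_assoc, ← add_assoc] at h

noncomputable def hitBound (k : ℕ) : ℝ := 44 / max (k : ℝ) 44

theorem hitBound_nonneg (k : ℕ) : 0 ≤ hitBound k := by
  unfold hitBound; positivity

theorem hitBound_le_one (k : ℕ) : hitBound k ≤ 1 :=
  div_le_one_of_le₀ (le_max_right _ _) (by positivity)

theorem hitBound_eq_one_of_le {k : ℕ} (hk : k ≤ 44) : hitBound k = 1 := by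
  rw [hitBound, max_eq_right (by exact_mod_cast hk)]
  norm_num

theorem hitBound_eq_of_ge {k : ℕ} (hk : 44 ≤ k) : hitBound k = 44 / k := by
  rw [hitBound, max_eq_left (by exact_mod_cast hk)]

theorem hitBound_le_div {k : ℕ} (hk : 0 < k) : hitBound k ≤ 44 / k :=
  div_le_div_of_nonneg_left (by norm_num) (by exact_mod_cast hk) (le_max_left _ _)

-- Clearing denominators leaves `x ^ 2 - 45 * x + 62 ≥ 0`, whence the threshold 44.
theorem lazy_walk_inv_superharmonic {x : ℝ} (hx : 44 ≤ x) :
    1 / 9 / (x - 2) + 1 / 4 / (x - 1) + 1 / 2 / (x + 1) ≤ 31 / 36 / x := by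
  rw [div_add_div _ _ (by linarith) (by linarith),
    div_add_div _ _ (mul_pos (by linarith) (by linarith)).ne' (by linarith),
    div_le_div_iff₀ (mul_pos (mul_pos (by linarith) (by linarith)) (by linarith)) (by linarith)]
  nlinarith [mul_nonneg (sub_nonneg.2 hx) (by linarith : (0 : ℝ) ≤ x - 1)]

namespace MarkovChain

variable (M : MarkovChain)

noncomputable def green (i : ℕ) : ℝ≥0∞ := ∑' n, M.step n i i

noncomputable def returnProb (i : ℕ) : ℝ≥0∞ := ∑' n, M.firstReturn i n

theorem step_zero (i j : ℕ) : M.step 0 i j = if i = j then 1 else 0 := rfl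

theorem step_succ (n i j : ℕ) : M.step (n + 1) i j = ∑' k, M.p i k * M.step n k j := rfl

theorem p_le_one (i j : ℕ) : M.p i j ≤ 1 :=
  M.row_sum i ▸ ENNReal.le_tsum j

theorem step_add (m n i j : ℕ) :
    M.step (m + n) i j = ∑' k, M.step m i k * M.step n k j := by
  induction m generalizing i with
  | zero =>
    rw [Nat.zero_add, tsum_eq_single i fun k hk => by simp [step_zero, Ne.symm hk]]
    simp [step_zero]
  | succ m ih =>
    rw [Nat.add_right_comm, step_succ]
    simp_rw [ih, step_succ, ← ENNReal.tsum_mul_right, ← ENNReal.tsum_mul_left, mul_assoc]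
    exact ENNReal.tsum_comm

theorem step_mul_step_le (m n i j k : ℕ) : M.step m i k * M.step n k j ≤ M.step (m + n) i j :=
  M.step_add m n i j ▸ ENNReal.le_tsum k

theorem hitAt_zero (i j : ℕ) : M.hitAt i 0 j = if j = i then 1 else 0 := rfl

@[simp]
theorem hitAt_succ_self (i n : ℕ) : M.hitAt i (n + 1) i = 0 := if_pos rfl

theorem hitAt_succ_of_ne {i j : ℕ} (h : j ≠ i) (n : ℕ) :
    M.hitAt i (n + 1) j = ∑' k, M.p j k * M.hitAt i n k := if_neg h

theorem step_eq_sum_hitAt_mul (i : ℕ) :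
    ∀ n j, M.step n j i = ∑ m ∈ range (n + 1), M.hitAt i m j * M.step (n - m) i i
  | 0, j => by by_cases h : j = i <;> simp [h, hitAt_zero, step_zero]
  | n + 1, j => by
    rw [sum_range_succ', hitAt_zero]
    by_cases h : j = i
    · subst h
      simp
    · simp_rw [if_neg h, zero_mul, add_zero, step_succ, step_eq_sum_hitAt_mul i n,
        ENNReal.tsum_mul_sum_mul, ← M.hitAt_succ_of_ne h, Nat.add_sub_add_right]

theorem step_succ_self (i n : ℕ) :
    M.step (n + 1) i i = ∑ m ∈ range (n + 1), M.firstReturn i m * M.step (n - m) i i := by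
  rw [step_succ]
  simp_rw [M.step_eq_sum_hitAt_mul i n, ENNReal.tsum_mul_sum_mul]
  rfl

theorem green_eq_one_add_returnProb_mul (i : ℕ) :
    M.green i = 1 + M.returnProb i * M.green i := by
  rw [green, returnProb, ENNReal.tsum_mul_tsum_eq_tsum_sum_range,
    tsum_eq_zero_add' ENNReal.summable, step_zero, if_pos rfl]
  simp_rw [step_succ_self]

theorem returnProb_lt_one_of_green_lt_top {i : ℕ} (h : M.green i < ⊤) : M.returnProb i < 1 := by
  by_contra! hR
  have : M.green i + 1 ≤ M.green i := calc
    M.green i + 1 ≤ 1 + M.returnProb i * M.green i := by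
      rw [add_comm]; gcongr; exact le_mul_of_one_le_left' hR
    _ = M.green i := (M.green_eq_one_add_returnProb_mul i).symm
  exact (ENNReal.lt_add_right h.ne one_ne_zero).not_ge this

theorem sum_range_step_self_le_geom (i N : ℕ) :
    ∑ n ∈ range N, M.step n i i ≤ ∑ k ∈ range N, M.returnProb i ^ k := by
  induction N with
  | zero => simp
  | succ N ih =>
    rw [sum_range_succ', geom_sum_succ, step_zero, if_pos rfl]
    gcongr ?_ + 1
    calc ∑ n ∈ range N, M.step (n + 1) i i
        = ∑ n ∈ range N, ∑ m ∈ range (n + 1), M.firstReturn i m * M.step (n - m) i i := by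
          simp_rw [step_succ_self]
      _ ≤ (∑ m ∈ range N, M.firstReturn i m) * ∑ l ∈ range N, M.step l i i :=
          ENNReal.sum_range_sum_range_succ_mul_le _ _ N
      _ ≤ M.returnProb i * ∑ k ∈ range N, M.returnProb i ^ k := by
          gcongr
          exact ENNReal.sum_le_tsum _

theorem green_le_inv_one_sub_returnProb (i : ℕ) : M.green i ≤ (1 - M.returnProb i)⁻¹ := by
  rw [green, ← ENNReal.tsum_geometric, ENNReal.tsum_eq_iSup_nat, ENNReal.tsum_eq_iSup_nat]
  exact iSup_mono (M.sum_range_step_self_le_geom i)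

theorem green_lt_top_of_returnProb_lt_one {i : ℕ} (h : M.returnProb i < 1) : M.green i < ⊤ :=
  (M.green_le_inv_one_sub_returnProb i).trans_lt (ENNReal.inv_lt_top.2 (tsub_pos_of_lt h))

theorem green_lt_top_of_step_pos {i j a b : ℕ} (hij : 0 < M.step a i j) (hji : 0 < M.step b j i)
    (h : M.green i < ⊤) : M.green j < ⊤ := by
  have hC : M.step a i j * M.step b j i ≠ 0 := (ENNReal.mul_pos hij.ne' hji.ne').ne'
  have key : M.step a i j * M.step b j i * M.green j ≤ M.green i := calc
    _ = ∑' n, M.step a i j * M.step n j j * M.step b j i := by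
      rw [green, ← ENNReal.tsum_mul_left]
      exact tsum_congr fun n => by ring
    _ ≤ ∑' n, M.step (a + n + b) i i := ENNReal.tsum_le_tsum fun n =>
      (mul_le_mul_left (M.step_mul_step_le ..) _).trans (M.step_mul_step_le ..)
    _ ≤ M.green i := ENNReal.tsum_comp_le_tsum_of_injective (fun x y hxy => by simpa using hxy) _
  refine lt_top_iff_ne_top.2 fun hj => h.ne (top_le_iff.1 ?_)
  rwa [hj, ENNReal.mul_top hC] at key

theorem transient_of_returnProb_lt_one (hirr : M.Irreducible) {i : ℕ} (h : M.returnProb i < 1) :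
    M.Transient := fun j => by
  obtain ⟨a, ha⟩ := hirr i j
  obtain ⟨b, hb⟩ := hirr j i
  exact M.returnProb_lt_one_of_green_lt_top
    (M.green_lt_top_of_step_pos ha hb (M.green_lt_top_of_returnProb_lt_one h))

theorem tsum_hitAt_le_of_superharmonic {i : ℕ} {g : ℕ → ℝ≥0∞} (hgi : 1 ≤ g i)
    (hg : ∀ k ≠ i, ∑' j, M.p k j * g j ≤ g k) (k : ℕ) : ∑' n, M.hitAt i n k ≤ g k := by
  rw [ENNReal.tsum_eq_iSup_nat]
  refine iSup_le fun N => ?_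
  induction N generalizing k with
  | zero => simp
  | succ N ih =>
    rw [sum_range_succ', hitAt_zero]
    by_cases hk : k = i
    · subst hk
      simpa using hgi
    · simp_rw [M.hitAt_succ_of_ne hk, if_neg hk, add_zero]
      calc ∑ m ∈ range N, ∑' j, M.p k j * M.hitAt i m j
          = ∑' j, M.p k j * ∑ m ∈ range N, M.hitAt i m j := by
            simp_rw [mul_sum]
            exact (Summable.tsum_finsetSum fun _ _ => ENNReal.summable).symm
        _ ≤ ∑' j, M.p k j * g j := ENNReal.tsum_le_tsum fun j => by gcongr; exact ih j
        _ ≤ g k := hg k hk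

theorem returnProb_le_of_superharmonic {i : ℕ} {g : ℕ → ℝ≥0∞} (hgi : 1 ≤ g i)
    (hg : ∀ k ≠ i, ∑' j, M.p k j * g j ≤ g k) : M.returnProb i ≤ ∑' j, M.p i j * g j := calc
  M.returnProb i = ∑' j, M.p i j * ∑' n, M.hitAt i n j := by
    simp_rw [returnProb, firstReturn, ← ENNReal.tsum_mul_left]
    exact ENNReal.tsum_comm
  _ ≤ ∑' j, M.p i j * g j :=
    ENNReal.tsum_le_tsum fun j => by gcongr; exact M.tsum_hitAt_le_of_superharmonic hgi hg j

theorem tsum_mul_ofReal (i : ℕ) {V : ℕ → ℝ} (hV : ∀ j, 0 ≤ V j)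
    (hs : Summable fun j => (M.p i j).toReal * V j) :
    ∑' j, M.p i j * ENNReal.ofReal (V j) = ENNReal.ofReal (∑' j, (M.p i j).toReal * V j) := by
  rw [ENNReal.ofReal_tsum_of_nonneg (fun j => mul_nonneg ENNReal.toReal_nonneg (hV j)) hs]
  refine tsum_congr fun j => ?_
  rw [ENNReal.ofReal_mul ENNReal.toReal_nonneg,
    ENNReal.ofReal_toReal (ne_top_of_le_ne_top ENNReal.one_ne_top (M.p_le_one i j))]

-- The row of state `i` of the walk, with `c` in place of `i ^ (-α)`.
def LazyRow (i : ℕ) (c : ℝ) : Prop :=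
  M.p i (i - 2) = ENNReal.ofReal ((1 / 9) * c) ∧
  M.p i (i - 1) = ENNReal.ofReal ((1 / 4) * c) ∧
  M.p i (i + 1) = ENNReal.ofReal ((1 / 2) * c) ∧
  M.p i i = ENNReal.ofReal (1 - (31 / 36) * c) ∧
  ∀ j : ℕ, j ≠ i - 2 → j ≠ i - 1 → j ≠ i → j ≠ i + 1 → M.p i j = 0

namespace LazyRow

variable {M} {i : ℕ} {c : ℝ}

theorem hasSum_toReal_mul (h : M.LazyRow i c) (hi : 2 ≤ i) (hc₀ : 0 ≤ c)
    (hc₁ : 31 / 36 * c ≤ 1) (f : ℕ → ℝ) :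
    HasSum (fun j => (M.p i j).toReal * f j)
      (1 / 9 * c * f (i - 2) + 1 / 4 * c * f (i - 1) + (1 - 31 / 36 * c) * f i
        + 1 / 2 * c * f (i + 1)) := by
  obtain ⟨h₂, h₁, hup, h₀, hz⟩ := h
  have := hasSum_of_eq_zero_off_window (f := fun j => (M.p i j).toReal * f j) hi
    fun j h2 h1 h0 hp => by simp [hz j h2 h1 h0 hp]
  rwa [h₂, h₁, hup, h₀, ENNReal.toReal_ofReal (by positivity),
    ENNReal.toReal_ofReal (by positivity), ENNReal.toReal_ofReal (by positivity),
    ENNReal.toReal_ofReal (by linarith)] at this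

theorem drift_eq (h : M.LazyRow i c) (hi : 2 ≤ i) (hc₀ : 0 ≤ c) (hc₁ : 31 / 36 * c ≤ 1) :
    M.drift i = 1 / 36 * c := by
  rw [drift, (h.hasSum_toReal_mul hi hc₀ hc₁ _).tsum_eq]
  push_cast [Nat.cast_sub hi, Nat.cast_sub (by omega : 1 ≤ i)]
  ring

theorem secondMoment_eq (h : M.LazyRow i c) (hi : 2 ≤ i) (hc₀ : 0 ≤ c)
    (hc₁ : 31 / 36 * c ≤ 1) : M.secondMoment i = 43 / 36 * c := by
  rw [secondMoment, (h.hasSum_toReal_mul hi hc₀ hc₁ _).tsum_eq]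
  push_cast [Nat.cast_sub hi, Nat.cast_sub (by omega : 1 ≤ i)]
  ring

theorem tsum_mul_hitBound_le (h : M.LazyRow i c) (hi : 45 ≤ i) (hc₀ : 0 ≤ c)
    (hc₁ : 31 / 36 * c ≤ 1) :
    ∑' j, M.p i j * ENNReal.ofReal (hitBound j) ≤ ENNReal.ofReal (hitBound i) := by
  have hs := h.hasSum_toReal_mul (by omega) hc₀ hc₁ hitBound
  rw [M.tsum_mul_ofReal i hitBound_nonneg hs.summable, hs.tsum_eq]
  refine ENNReal.ofReal_le_ofReal ?_
  have h₂ : hitBound (i - 2) ≤ 44 / ((i : ℝ) - 2) := by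
    simpa [Nat.cast_sub (by omega : 2 ≤ i)] using hitBound_le_div (k := i - 2) (by omega)
  have h₁ : hitBound (i - 1) ≤ 44 / ((i : ℝ) - 1) := by
    simpa [Nat.cast_sub (by omega : 1 ≤ i)] using hitBound_le_div (k := i - 1) (by omega)
  have hup : hitBound (i + 1) ≤ 44 / ((i : ℝ) + 1) := by
    simpa using hitBound_le_div (k := i + 1) (by omega)
  have key := lazy_walk_inv_superharmonic (x := i) (by exact_mod_cast (by omega : 44 ≤ i))
  rw [hitBound_eq_of_ge (by omega : 44 ≤ i)]
  calc 1 / 9 * c * hitBound (i - 2) + 1 / 4 * c * hitBound (i - 1) + (1 - 31 / 36 * c) * (44 / i)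
        + 1 / 2 * c * hitBound (i + 1)
      ≤ 1 / 9 * c * (44 / (i - 2)) + 1 / 4 * c * (44 / (i - 1)) + (1 - 31 / 36 * c) * (44 / i)
        + 1 / 2 * c * (44 / (i + 1)) := by gcongr
    _ ≤ 44 / i := by linear_combination 44 * mul_le_mul_of_nonneg_left key hc₀

theorem tsum_mul_hitBound_lt_one (h : M.LazyRow 44 c) (hc₀ : 0 < c) (hc₁ : 31 / 36 * c ≤ 1) :
    ∑' j, M.p 44 j * ENNReal.ofReal (hitBound j) < 1 := by
  have hs := h.hasSum_toReal_mul (by norm_num) hc₀.le hc₁ hitBound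
  rw [M.tsum_mul_ofReal 44 hitBound_nonneg hs.summable, hs.tsum_eq, ENNReal.ofReal_lt_one]
  norm_num [hitBound]
  linarith

end LazyRow

theorem transient_of_lazyRow (hirr : M.Irreducible) (c : ℕ → ℝ)
    (hc : ∀ i, 44 ≤ i → 0 < c i ∧ 31 / 36 * c i ≤ 1) (hrow : ∀ i, 44 ≤ i → M.LazyRow i (c i)) :
    M.Transient := by
  refine M.transient_of_returnProb_lt_one hirr (i := 44) <|
    (M.returnProb_le_of_superharmonic ?_ fun k hk => ?_).trans_lt <|
      (hrow 44 le_rfl).tsum_mul_hitBound_lt_one (hc 44 le_rfl).1 (hc 44 le_rfl).2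
  · simp [hitBound_eq_one_of_le le_rfl]
  · rcases hk.lt_or_gt with hlt | hgt
    · calc ∑' j, M.p k j * ENNReal.ofReal (hitBound j) ≤ ∑' j, M.p k j :=
            ENNReal.tsum_le_tsum fun j =>
              mul_le_of_le_one_right' (ENNReal.ofReal_le_one.2 (hitBound_le_one j))
        _ = ENNReal.ofReal (hitBound k) := by simp [M.row_sum k, hitBound_eq_one_of_le hlt.le]
    · exact (hrow k hgt.le).tsum_mul_hitBound_le hgt (hc k hgt.le).1.le (hc k hgt.le).2

end MarkovChain

theorem stmt11_general (α : ℝ) (hα₁ : 1 / 2 < α)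
    (M : MarkovChain) (hirr : M.Irreducible)
    (htp : ∀ i : ℕ, 3 ≤ i →
      M.p i (i - 2) = ENNReal.ofReal ((1 / 9) * (i : ℝ) ^ (-α)) ∧
      M.p i (i - 1) = ENNReal.ofReal ((1 / 4) * (i : ℝ) ^ (-α)) ∧
      M.p i (i + 1) = ENNReal.ofReal ((1 / 2) * (i : ℝ) ^ (-α)) ∧
      M.p i i = ENNReal.ofReal (1 - (31 / 36) * (i : ℝ) ^ (-α)) ∧
      ∀ j : ℕ, j ≠ i - 2 → j ≠ i - 1 → j ≠ i → j ≠ i + 1 → M.p i j = 0) :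
    (∀ i : ℕ, 3 ≤ i → M.drift i = (1 / 36) * (i : ℝ) ^ (-α)) ∧
    (∀ i : ℕ, 3 ≤ i → M.secondMoment i = (43 / 36) * (i : ℝ) ^ (-α)) ∧
    Filter.Tendsto M.secondMoment Filter.atTop (nhds 0) ∧
    M.Transient := by
  have hα : 0 < α := by linarith
  have hrow (i : ℕ) (hi : 3 ≤ i) : M.LazyRow i ((i : ℝ) ^ (-α)) := htp i hi
  have hc (i : ℕ) (hi : 1 ≤ i) : 0 < (i : ℝ) ^ (-α) ∧ 31 / 36 * (i : ℝ) ^ (-α) ≤ 1 := by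
    have hi' : (1 : ℝ) ≤ i := by exact_mod_cast hi
    refine ⟨by positivity, ?_⟩
    linarith [Real.rpow_le_one_of_one_le_of_nonpos hi' (neg_nonpos.2 hα.le)]
  have hmom (i : ℕ) (hi : 3 ≤ i) :
      M.drift i = 1 / 36 * (i : ℝ) ^ (-α) ∧ M.secondMoment i = 43 / 36 * (i : ℝ) ^ (-α) :=
    have ⟨hc₀, hc₁⟩ := hc i (by omega)
    ⟨(hrow i hi).drift_eq (by omega) hc₀.le hc₁, (hrow i hi).secondMoment_eq (by omega) hc₀.le hc₁⟩
  refine ⟨fun i hi => (hmom i hi).1, fun i hi => (hmom i hi).2, ?_, ?_⟩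
  · have h := ((tendsto_rpow_neg_atTop hα).comp tendsto_natCast_atTop_atTop).const_mul (43 / 36)
    rw [mul_zero] at h
    exact h.congr' <| (eventually_ge_atTop 3).mono fun i hi => ((hmom i hi).2).symm
  · exact M.transient_of_lazyRow hirr (fun i => (i : ℝ) ^ (-α)) (fun i hi => hc i (by omega))
      fun i hi => hrow i (by omega)

/-- the explicit lazy walk with drift `γ_i = (1/36) i^{-α}`:
its second-moment drift `σ_i = (43/36) i^{-α}` tends to 0 (so Lamperti does
not apply), yet the chain is transient. -/
theorem stmt11 (α : ℝ) (hα₁ : 1 / 2 < α) (hα₂ : α < 1)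
    (M : MarkovChain) (hirr : M.Irreducible)
    (htp : ∀ i : ℕ, 3 ≤ i →
      M.p i (i - 2) = ENNReal.ofReal ((1 / 9) * (i : ℝ) ^ (-α)) ∧
      M.p i (i - 1) = ENNReal.ofReal ((1 / 4) * (i : ℝ) ^ (-α)) ∧
      M.p i (i + 1) = ENNReal.ofReal ((1 / 2) * (i : ℝ) ^ (-α)) ∧
      M.p i i = ENNReal.ofReal (1 - (31 / 36) * (i : ℝ) ^ (-α)) ∧
      ∀ j : ℕ, j ≠ i - 2 → j ≠ i - 1 → j ≠ i → j ≠ i + 1 → M.p i j = 0) :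
    (∀ i : ℕ, 3 ≤ i → M.drift i = (1 / 36) * (i : ℝ) ^ (-α)) ∧
    (∀ i : ℕ, 3 ≤ i → M.secondMoment i = (43 / 36) * (i : ℝ) ^ (-α)) ∧
    Filter.Tendsto M.secondMoment Filter.atTop (nhds 0) ∧
    M.Transient :=
  stmt11_general α hα₁ M hirr htp
end

section
/- If a downward uniformly bounded Markov chain on the nonnegative integers has finite mean drifts gamma_i for all i and gamma_i >= 0 for all i >= N (some N), then the chain is not positive recurrent (Kaplan's non-ergodicity criterion). -/
open scoped ENNReal BigOperators
open Filter

/-!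
Suppose the chain were positive recurrent. The mean return time to `0` is finite, and by
irreducibility so is the mean hitting time of `0` from every state; in particular the hitting
time `τ` of `{0, …, N}` from `N + 1` has finite mean. Above `N` the drift is nonnegative, so
`X_{n ∧ τ}` is a submartingale and `E[X_{n ∧ τ}] ≥ N + 1`. But downward jumps are at most `k`,
so `X_{n ∧ τ} ≤ N + k (τ - n)⁺`, whence `E[X_{n ∧ τ}] ≤ N + k E[(τ - n)⁺] → N`, a contradiction.
-/

lemma ENNReal.tsum_tsum_add_succ (f : ℕ → ℝ≥0∞) :
    ∑' m, ∑' n, f (n + (m + 1)) = ∑' n, n * f n := by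
  have shift (m : ℕ) : ∑' n, f (n + (m + 1)) = ∑' n, if m < n then f n else 0 := by
    refine (tsum_congr fun n => (if_pos (show m < n + (m + 1) by omega)).symm).trans
      ((add_left_injective (m + 1)).tsum_eq (f := fun n => if m < n then f n else 0)
        fun n hn => ?_)
    have : m < n := by by_contra h; exact hn (if_neg h)
    exact ⟨n - (m + 1), by simp only; omega⟩
  simp_rw [shift]
  rw [ENNReal.tsum_comm]
  refine tsum_congr fun n => ?_
  rw [tsum_eq_sum (s := Finset.range n) fun m hm => if_neg (by simpa using hm),
    Finset.sum_congr rfl fun m hm => if_pos (Finset.mem_range.1 hm)]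
  simp

namespace MarkovChain

/-- `M.survival c m j` is the probability that the chain started at `j` stays above `c` at
times `0, …, m`, i.e. that its hitting time of `{0, …, c}` exceeds `m`. -/
noncomputable def survival (M : MarkovChain) (c : ℕ) : ℕ → ℕ → ℝ≥0∞
  | 0, j => if j ≤ c then 0 else 1
  | m + 1, j => if j ≤ c then 0 else ∑' l, M.p j l * M.survival c m l

/-- The expected hitting time of `{0, …, c}` from `j` (`⊤` if it is not hit almost surely). -/
noncomputable def meanHittingTime (M : MarkovChain) (c j : ℕ) : ℝ≥0∞ :=
  ∑' m, M.survival c m j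

/-- `M.stoppedMean c n j` is `E_j[X_{n ∧ τ}]`, where `τ` is the hitting time of `{0, …, c}`. -/
noncomputable def stoppedMean (M : MarkovChain) (c : ℕ) : ℕ → ℕ → ℝ≥0∞
  | 0, j => j
  | n + 1, j => if j ≤ c then j else ∑' l, M.p j l * M.stoppedMean c n l

lemma DownwardBounded.mono {M : MarkovChain} {k k' : ℕ} (h : M.DownwardBounded k)
    (hk : k ≤ k') : M.DownwardBounded k' :=
  fun i j hij => h i j (by omega)

variable (M : MarkovChain) {c j k : ℕ}

lemma survival_of_le (h : j ≤ c) (m : ℕ) : M.survival c m j = 0 := by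
  cases m <;> simp [survival, h]

lemma survival_zero_of_lt (h : c < j) : M.survival c 0 j = 1 := by
  simp [survival, h.not_ge]

lemma survival_succ_of_lt (h : c < j) (m : ℕ) :
    M.survival c (m + 1) j = ∑' l, M.p j l * M.survival c m l := by
  simp [survival, h.not_ge]

lemma survival_anti {c' : ℕ} (hc : c' ≤ c) (m j : ℕ) :
    M.survival c m j ≤ M.survival c' m j := by
  induction m generalizing j with
  | zero =>
    by_cases hj : j ≤ c
    · simp [M.survival_of_le hj]
    · simp [M.survival_zero_of_lt (not_le.1 hj),
        M.survival_zero_of_lt (hc.trans_lt (not_le.1 hj))]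
  | succ m ih =>
    by_cases hj : j ≤ c
    · simp [M.survival_of_le hj]
    · rw [M.survival_succ_of_lt (not_le.1 hj),
        M.survival_succ_of_lt (hc.trans_lt (not_le.1 hj))]
      exact ENNReal.tsum_le_tsum fun l => mul_le_mul_right (ih l) _

lemma meanHittingTime_anti {c' : ℕ} (hc : c' ≤ c) (j : ℕ) :
    M.meanHittingTime c j ≤ M.meanHittingTime c' j :=
  ENNReal.tsum_le_tsum fun m => M.survival_anti hc m j

lemma meanHittingTime_of_lt (h : c < j) :
    M.meanHittingTime c j = 1 + ∑' l, M.p j l * M.meanHittingTime c l := by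
  simp_rw [meanHittingTime, ← ENNReal.tsum_mul_left]
  rw [tsum_eq_zero_add' ENNReal.summable, ENNReal.tsum_comm]
  simp only [M.survival_zero_of_lt h, M.survival_succ_of_lt h]

lemma survival_zero_add_sum_hitAt (m j : ℕ) :
    M.survival 0 m j + ∑ n ∈ Finset.range (m + 1), M.hitAt 0 n j = 1 := by
  induction m generalizing j with
  | zero =>
    rcases Nat.eq_zero_or_pos j with rfl | hj
    · simp [survival, hitAt]
    · simp [survival, hitAt, hj.ne']
  | succ m ih =>
    rcases Nat.eq_zero_or_pos j with rfl | hj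
    · simp [survival, hitAt, Finset.sum_range_succ']
    · rw [M.survival_succ_of_lt hj, Finset.sum_range_succ']
      simp only [hitAt, if_neg hj.ne', add_zero]
      rw [← (Summable.tsum_finsetSum fun _ _ => ENNReal.summable), ← ENNReal.tsum_add]
      simp_rw [← Finset.mul_sum, ← mul_add, ih, mul_one, M.row_sum]

lemma tsum_p_mul_survival_zero (hrec : ∑' n, M.firstReturn 0 n = 1) (m : ℕ) :
    ∑' l, M.p 0 l * M.survival 0 m l = ∑' n, M.firstReturn 0 (n + (m + 1)) := by
  have hsplit : ∑ n ∈ Finset.range (m + 1), M.firstReturn 0 n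
      + ∑' l, M.p 0 l * M.survival 0 m l = 1 := by
    simp_rw [firstReturn, ← (Summable.tsum_finsetSum fun _ _ => ENNReal.summable),
      ← ENNReal.tsum_add, ← Finset.mul_sum, ← mul_add, add_comm _ (M.survival 0 m _),
      M.survival_zero_add_sum_hitAt, mul_one, M.row_sum]
  have hfin : ∑ n ∈ Finset.range (m + 1), M.firstReturn 0 n ≠ ⊤ :=
    ENNReal.sum_ne_top.2 fun n _ => ne_top_of_le_ne_top ENNReal.one_ne_top
      (hrec ▸ ENNReal.le_tsum n)
  refine (ENNReal.add_right_inj hfin).1 (hsplit.trans ?_)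
  rw [Summable.sum_add_tsum_nat_add' ENNReal.summable, hrec]

lemma tsum_p_mul_meanHittingTime_zero_le (hrec : ∑' n, M.firstReturn 0 n = 1) :
    ∑' l, M.p 0 l * M.meanHittingTime 0 l ≤ ∑' n : ℕ, ((n : ℝ≥0∞) + 1) * M.firstReturn 0 n :=
  calc ∑' l, M.p 0 l * M.meanHittingTime 0 l
      = ∑' m, ∑' n, M.firstReturn 0 (n + (m + 1)) := by
        simp_rw [meanHittingTime, ← ENNReal.tsum_mul_left]
        rw [ENNReal.tsum_comm]
        exact tsum_congr fun m => M.tsum_p_mul_survival_zero hrec m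
    _ = ∑' n : ℕ, (n : ℝ≥0∞) * M.firstReturn 0 n := ENNReal.tsum_tsum_add_succ _
    _ ≤ _ := ENNReal.tsum_le_tsum fun n => mul_le_mul_left le_self_add _

lemma exists_p_mul_step_ne_zero {n i : ℕ} (h : M.step (n + 1) i j ≠ 0) :
    ∃ l, M.p i l ≠ 0 ∧ M.step n l j ≠ 0 := by
  by_contra! hall
  exact h (ENNReal.tsum_eq_zero.2 fun l => by
    by_cases hl : M.p i l = 0 <;> simp [hl, hall])

/-- `1 + ∑' l, M.p 0 l * M.meanHittingTime 0 l` is the mean return time to `0`. -/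
lemma meanHittingTime_zero_lt_top (hirr : M.Irreducible)
    (h0 : ∑' l, M.p 0 l * M.meanHittingTime 0 l < ⊤) (j : ℕ) :
    M.meanHittingTime 0 j < ⊤ := by
  have hreach (n : ℕ) : ∀ i, ∑' l, M.p i l * M.meanHittingTime 0 l < ⊤ → M.step n i j ≠ 0 →
      ∑' l, M.p j l * M.meanHittingTime 0 l < ⊤ := by
    induction n with
    | zero =>
      intro i hi hstep
      obtain rfl : i = j := by by_contra hij; simp [step, hij] at hstep
      exact hi
    | succ n ih =>
      intro i hi hstep
      obtain ⟨l, hil, hlj⟩ := M.exists_p_mul_step_ne_zero hstep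
      have hel : M.meanHittingTime 0 l ≠ ⊤ := fun htop =>
        ((ENNReal.le_tsum l).trans_lt hi).ne (ENNReal.mul_eq_top.2 (Or.inl ⟨hil, htop⟩))
      refine ih l ?_ hlj
      rcases Nat.eq_zero_or_pos l with rfl | hl
      · exact h0
      · exact (le_add_self.trans (M.meanHittingTime_of_lt hl).ge).trans_lt hel.lt_top
  obtain ⟨n, hn⟩ := hirr 0 j
  rcases Nat.eq_zero_or_pos j with rfl | hj
  · simp [meanHittingTime, M.survival_of_le le_rfl]
  · rw [M.meanHittingTime_of_lt hj]
    exact ENNReal.add_lt_top.2 ⟨ENNReal.one_lt_top, hreach n 0 h0 hn.ne'⟩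

lemma natCast_le_tsum_p_mul_of_drift_nonneg (hfin : M.DriftFinite j)
    (hdrift : 0 ≤ M.drift j) : (j : ℝ≥0∞) ≤ ∑' l, M.p j l * l := by
  have hp : Summable fun l => (M.p j l).toReal :=
    ENNReal.summable_toReal (by rw [M.row_sum j]; exact ENNReal.one_ne_top)
  have hp_sum : ∑' l, (M.p j l).toReal = 1 := by
    rw [← ENNReal.tsum_toReal_eq fun l => ne_top_of_le_ne_top ENNReal.one_ne_top
      (M.row_sum j ▸ ENNReal.le_tsum l), M.row_sum j, ENNReal.toReal_one]
  have hsplit (l : ℕ) : (M.p j l).toReal * l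
      = (M.p j l).toReal * ((l : ℝ) - j) + (M.p j l).toReal * j := by ring
  have hmean : Summable fun l => (M.p j l).toReal * l := by
    simp_rw [hsplit]; exact hfin.add (hp.mul_right _)
  have hreal : (j : ℝ) ≤ ∑' l, (M.p j l).toReal * l := by
    rw [tsum_congr hsplit, hfin.tsum_add (hp.mul_right _), tsum_mul_right, hp_sum, one_mul,
      le_add_iff_nonneg_left]
    exact hdrift
  calc (j : ℝ≥0∞) = ENNReal.ofReal j := (ENNReal.ofReal_natCast j).symm
    _ ≤ ENNReal.ofReal (∑' l, (M.p j l).toReal * l) := ENNReal.ofReal_le_ofReal hreal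
    _ = ∑' l, M.p j l * l := by
      rw [ENNReal.ofReal_tsum_of_nonneg (fun l => by positivity) hmean]
      refine tsum_congr fun l => ?_
      rw [ENNReal.ofReal_mul ENNReal.toReal_nonneg, ENNReal.ofReal_toReal, ENNReal.ofReal_natCast]
      exact ne_top_of_le_ne_top ENNReal.one_ne_top (M.row_sum j ▸ ENNReal.le_tsum l)

/-- Optional stopping for the submartingale `X` above level `c`. -/
lemma natCast_le_stoppedMean (hsub : ∀ j, c < j → (j : ℝ≥0∞) ≤ ∑' l, M.p j l * l)
    (n j : ℕ) : (j : ℝ≥0∞) ≤ M.stoppedMean c n j := by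
  induction n generalizing j with
  | zero => exact le_rfl
  | succ n ih =>
    by_cases hj : j ≤ c
    · simp [stoppedMean, hj]
    · simp only [stoppedMean, if_neg hj]
      exact (hsub j (not_le.1 hj)).trans
        (ENNReal.tsum_le_tsum fun l => mul_le_mul_right (ih l) _)

lemma survival_eq_one (hdb : M.DownwardBounded k) (m : ℕ) (hj : c + k * m < j) :
    M.survival c m j = 1 := by
  induction m generalizing j with
  | zero => exact M.survival_zero_of_lt (by omega)
  | succ m ih =>
    rw [M.survival_succ_of_lt (by nlinarith), ← M.row_sum j]
    refine tsum_congr fun l => ?_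
    by_cases hl : l + k < j
    · rw [hdb j l hl, zero_mul]
    · rw [ih (by nlinarith), mul_one]

/-- With downward jumps of at most `k`, reaching `{0, …, c}` from `j` takes at least
`(j - c) / k` steps. -/
lemma natCast_le_add_mul_meanHittingTime (hk : 0 < k) (hdb : M.DownwardBounded k) (j : ℕ) :
    (j : ℝ≥0∞) ≤ c + k * M.meanHittingTime c j := by
  by_cases hj : j ≤ c
  · exact (Nat.cast_le.2 hj).trans le_self_add
  set q := (j - c - 1) / k + 1
  have hq : j - c - 1 < k * q := Nat.lt_mul_div_succ _ hk
  have hsurv : (q : ℝ≥0∞) ≤ M.meanHittingTime c j :=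
    calc (q : ℝ≥0∞) = ∑ m ∈ Finset.range q, M.survival c m j := by
          rw [Finset.sum_congr rfl fun m hm => M.survival_eq_one hdb m ?_]
          · simp
          have := (Nat.le_div_iff_mul_le hk).1 (Nat.lt_succ_iff.1 (Finset.mem_range.1 hm))
          rw [mul_comm] at this
          omega
      _ ≤ M.meanHittingTime c j := ENNReal.sum_le_tsum _
  calc (j : ℝ≥0∞) ≤ ((c + k * q : ℕ) : ℝ≥0∞) := Nat.cast_le.2 (by omega)
    _ ≤ c + k * M.meanHittingTime c j := by push_cast; gcongr

/-- Each step of `X_{n ∧ τ}` brings it down by at most `k`, so it lies within `k` times the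
remaining time to `τ` above `c`. -/
lemma stoppedMean_le (hk : 0 < k) (hdb : M.DownwardBounded k) (n j : ℕ) :
    M.stoppedMean c n j ≤ c + k * ∑' m, M.survival c (m + n) j := by
  induction n generalizing j with
  | zero =>
    simpa [stoppedMean, meanHittingTime] using M.natCast_le_add_mul_meanHittingTime hk hdb j
  | succ n ih =>
    by_cases hj : j ≤ c
    · simp only [stoppedMean, if_pos hj]
      exact (Nat.cast_le.2 hj).trans le_self_add
    calc M.stoppedMean c (n + 1) j
        = ∑' l, M.p j l * M.stoppedMean c n l := by simp [stoppedMean, hj]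
      _ ≤ ∑' l, M.p j l * (c + k * ∑' m, M.survival c (m + n) l) :=
        ENNReal.tsum_le_tsum fun l => mul_le_mul_right (ih l) _
      _ = c + k * ∑' m, ∑' l, M.p j l * M.survival c (m + n) l := by
        simp_rw [mul_add, ENNReal.tsum_add, ENNReal.tsum_mul_right, M.row_sum, one_mul,
          mul_left_comm _ (k : ℝ≥0∞), ENNReal.tsum_mul_left, ← ENNReal.tsum_mul_left]
        rw [ENNReal.tsum_comm]
      _ = c + k * ∑' m, M.survival c (m + (n + 1)) j := by
        simp_rw [← add_assoc, M.survival_succ_of_lt (not_le.1 hj)]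

lemma meanHittingTime_eq_top (hk : 0 < k) (hdb : M.DownwardBounded k)
    (hsub : ∀ j, c < j → (j : ℝ≥0∞) ≤ ∑' l, M.p j l * l) :
    M.meanHittingTime c (c + 1) = ⊤ := by
  by_contra hfin
  have htail : Tendsto (fun n => (k : ℝ≥0∞) * ∑' m, M.survival c (m + n) (c + 1))
      atTop (nhds 0) := by
    simpa using ENNReal.Tendsto.const_mul (ENNReal.tendsto_sum_nat_add _ hfin)
      (Or.inr (ENNReal.natCast_ne_top k))
  obtain ⟨n, hn⟩ := (htail.eventually_lt_const zero_lt_one).exists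
  have := calc ((c + 1 : ℕ) : ℝ≥0∞)
      ≤ M.stoppedMean c n (c + 1) := M.natCast_le_stoppedMean hsub n (c + 1)
    _ ≤ c + k * ∑' m, M.survival c (m + n) (c + 1) := M.stoppedMean_le hk hdb n (c + 1)
    _ < c + 1 := ENNReal.add_lt_add_left (ENNReal.natCast_ne_top c) hn
  exact this.ne (by push_cast; rfl)

end MarkovChain

/-- Kaplan's non-ergodicity criterion: a downward uniformly
bounded irreducible chain with finite, eventually nonnegative mean drifts is
not positive recurrent. -/
theorem stmt17 (M : MarkovChain) (hirr : M.Irreducible) (k : ℕ)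
    (hdb : M.DownwardBounded k)
    (hfin : ∀ i, M.DriftFinite i)
    (N : ℕ) (hdrift : ∀ i, N ≤ i → 0 ≤ M.drift i) :
    ¬ M.PositiveRecurrent := by
  rintro ⟨hrec, hexp⟩
  have hreturn : ∑' l, M.p 0 l * M.meanHittingTime 0 l < ⊤ :=
    (M.tsum_p_mul_meanHittingTime_zero_le (hrec 0)).trans_lt (hexp 0)
  have hsub (j : ℕ) (hj : N < j) : (j : ℝ≥0∞) ≤ ∑' l, M.p j l * l :=
    M.natCast_le_tsum_p_mul_of_drift_nonneg (hfin j) (hdrift j hj.le)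
  have hinfinite := M.meanHittingTime_eq_top k.succ_pos (hdb.mono k.le_succ) hsub
  exact hinfinite.not_lt ((M.meanHittingTime_anti (Nat.zero_le N) (N + 1)).trans_lt
    (M.meanHittingTime_zero_lt_top hirr hreturn (N + 1)))
end
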